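/- arXiv:2308.01685 — 2 statements merged into one kernel-verified Lean document; each statement's English description precedes it below -/
import Mathlib

section
/- For each integer q ≥ 1, there exists a tree T with μ(T) = 2q+1, n(T) = 4q+2, α(T) = 2q+1, and a(T) = 3q+1, so that a(T) - α(T) = (μ(T)-1)/2; hence the bound a(T) - α(T) ≤ (μ(T)-1)/2 is tight for every odd matching number. -/
/-!
The tree is a spider: a root with one leg of length one and `2q` legs of length two. Pairing
the root with its leaf and every middle vertex with its pendant leaf gives a perfect matching
of `2q+1` edges, while the `2q+1` leaves are independent; an independent set meets each edge
of a perfect matching at most once, so `α = μ = 2q+1`. For the annihilation number, the leaves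
have degree one and every other vertex degree at least two, so `k` vertices have degree sum at
least `2k - (2q+1)`; as this is at most `m = 4q+1`, `k ≤ 3q+1`, with equality for the leaves
together with `q` middle vertices.
-/

open Finset

namespace AnnPaper

variable {V : Type*}

/-- A finset of vertices is independent: no two of its members are adjacent. -/
def IsIndepFinset (G : SimpleGraph V) (s : Finset V) : Prop :=
  ∀ a ∈ s, ∀ b ∈ s, ¬ G.Adj a b

/-- The independence number `α(G)`. -/
noncomputable def indepNum (G : SimpleGraph V) : ℕ :=
  sSup {k | ∃ s : Finset V, IsIndepFinset G s ∧ s.card = k}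

/-- A finset of edges is a matching: edges of `G`, pairwise vertex-disjoint. -/
def IsMatchingFinset (G : SimpleGraph V) (s : Finset (Sym2 V)) : Prop :=
  (↑s ⊆ G.edgeSet) ∧ ∀ e ∈ s, ∀ f ∈ s, e ≠ f → ∀ v : V, v ∈ e → v ∉ f

/-- The matching number `μ(G)`. -/
noncomputable def matchNum (G : SimpleGraph V) : ℕ :=
  sSup {k | ∃ s : Finset (Sym2 V), IsMatchingFinset G s ∧ s.card = k}

/-- The number of edges `m(G)`. -/
noncomputable def edgeCount (G : SimpleGraph V) : ℕ := G.edgeSet.ncard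

/-- The degree of a vertex. -/
noncomputable def deg (G : SimpleGraph V) (v : V) : ℕ := (G.neighborSet v).ncard

/-- The annihilation number `a(G)`: the largest `k` such that the sum of the `k`
smallest degrees is at most `m(G)`; equivalently, the largest cardinality of a
set of vertices whose degree sum is at most `m(G)`. -/
noncomputable def annNum (G : SimpleGraph V) : ℕ :=
  sSup {k | ∃ A : Finset V, A.card = k ∧ ∑ v ∈ A, deg G v ≤ edgeCount G}

/-- The number of edges of the subgraph induced on a set of vertices. -/
noncomputable def inducedEdgeCount (G : SimpleGraph V) (A : Set V) : ℕ :=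
  (SimpleGraph.induce A G).edgeSet.ncard

theorem two_mul_card_le_sum_add_card {α : Type*} [DecidableEq α] {f : α → ℕ}
    {A L : Finset α} (hL : ∀ v ∈ L, 1 ≤ f v) (hnotL : ∀ v ∉ L, 2 ≤ f v) :
    2 * A.card ≤ ∑ v ∈ A, f v + L.card := by
  have hin : (A.filter (· ∈ L)).card * 1 ≤ ∑ v ∈ A.filter (· ∈ L), f v :=
    card_nsmul_le_sum _ _ 1 fun v hv => hL v (mem_filter.1 hv).2
  have hout : (A.filter (· ∉ L)).card * 2 ≤ ∑ v ∈ A.filter (· ∉ L), f v :=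
    card_nsmul_le_sum _ _ 2 fun v hv => hnotL v (mem_filter.1 hv).2
  have hsub : (A.filter (· ∈ L)).card ≤ L.card := card_le_card fun v hv => (mem_filter.1 hv).2
  rw [← sum_filter_add_sum_filter_not A (· ∈ L),
    ← card_filter_add_card_filter_not (s := A) (· ∈ L)]
  omega

section General

variable {G : SimpleGraph V}

theorem IsMatchingFinset.two_mul_card_le [Fintype V] {M : Finset (Sym2 V)}
    (hM : IsMatchingFinset G M) : 2 * M.card ≤ Fintype.card V := by
  classical
  have hdisj : (M : Set (Sym2 V)).PairwiseDisjoint Sym2.toFinset := by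
    intro e he f hf hef
    rw [Function.onFun, disjoint_left]
    intro v hve hvf
    exact hM.2 e he f hf hef v (Sym2.mem_toFinset.1 hve) (Sym2.mem_toFinset.1 hvf)
  calc 2 * M.card = ∑ e ∈ M, e.toFinset.card := by
        rw [mul_comm, sum_const_nat fun e he =>
          Sym2.card_toFinset_of_not_isDiag e (G.not_isDiag_of_mem_edgeSet (hM.1 he))]
    _ = (M.biUnion Sym2.toFinset).card := (card_biUnion hdisj).symm
    _ ≤ Fintype.card V := card_le_univ _

theorem IsIndepFinset.card_le_of_cover {s : Finset V} {M : Finset (Sym2 V)}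
    (hs : IsIndepFinset G s) (hM : (M : Set (Sym2 V)) ⊆ G.edgeSet)
    (hcover : ∀ v, ∃ e ∈ M, v ∈ e) : s.card ≤ M.card := by
  choose e heM hve using hcover
  refine card_le_card_of_injOn e (fun v _ => heM v) fun a ha b hb hab => ?_
  by_contra hne
  have hab' : e a = s(a, b) := (Sym2.mem_and_mem_iff hne).1 ⟨hve a, hab ▸ hve b⟩
  exact hs a ha b hb (G.mem_edgeSet.1 (hab' ▸ hM (heM a)))

theorem sum_deg_eq_two_mul_edgeCount [Fintype V] : ∑ v, deg G v = 2 * edgeCount G := by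
  classical
  have hdeg : ∀ v, deg G v = G.degree v := fun v => by
    rw [deg, Set.ncard_eq_toFinset_card', Set.toFinset_card, G.card_neighborSet_eq_degree]
  rw [sum_congr rfl fun v _ => hdeg v, G.sum_degrees_eq_twice_card_edges, edgeCount,
    ← G.coe_edgeFinset, Set.ncard_coe_finset]

theorem isTree_of_connected_of_edgeCount [Fintype V] (hG : G.Connected)
    (hcard : edgeCount G + 1 = Fintype.card V) : G.IsTree := by
  rw [SimpleGraph.isTree_iff_connected_and_card, Nat.card_coe_set_eq, Nat.card_eq_fintype_card]
  exact ⟨hG, hcard⟩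

end General

/-- Vertex labels: `0` is the root, `1` its leaf neighbour, `2, …, 2q+1` its neighbours of
degree two, and `i + 2q` is the pendant leaf at `i`. -/
def spiderAdj (q i j : ℕ) : Prop :=
  (i = 0 ∧ 1 ≤ j ∧ j ≤ 2*q+1) ∨ (j = 0 ∧ 1 ≤ i ∧ i ≤ 2*q+1) ∨
  (2 ≤ i ∧ i ≤ 2*q+1 ∧ j = i + 2*q) ∨ (2 ≤ j ∧ j ≤ 2*q+1 ∧ i = j + 2*q)

instance (q i j : ℕ) : Decidable (spiderAdj q i j) := by unfold spiderAdj; infer_instance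

def spider (q : ℕ) : SimpleGraph (Fin (4*q+2)) where
  Adj v w := spiderAdj q v w
  symm := ⟨fun _ _ h => by unfold spiderAdj at *; omega⟩
  loopless := ⟨fun _ h => by unfold spiderAdj at h; omega⟩

@[simp]
theorem spider_adj {q : ℕ} {v w : Fin (4*q+2)} : (spider q).Adj v w ↔ spiderAdj q v w := Iff.rfl

def spiderDeg (q i : ℕ) : ℕ :=
  if i = 0 then 2*q+1 else if 2 ≤ i ∧ i ≤ 2*q+1 then 2 else 1

theorem deg_spider (q : ℕ) (v : Fin (4*q+2)) : deg (spider q) v = spiderDeg q v := by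
  have hv := v.isLt
  have hnbr :
      Fin.val '' (spider q).neighborSet v = ↑((range (4*q+2)).filter (spiderAdj q v)) := by
    ext i
    simp only [Set.mem_image, SimpleGraph.mem_neighborSet, spider_adj, coe_filter, mem_range,
      Set.mem_ofPred_eq]
    exact ⟨fun ⟨w, hw, hwi⟩ => hwi ▸ ⟨w.isLt, hw⟩,
      fun ⟨hi, h⟩ => ⟨⟨i, hi⟩, h, rfl⟩⟩
  rw [deg, ← Set.ncard_image_of_injective _ Fin.val_injective, hnbr, Set.ncard_coe_finset]
  unfold spiderDeg
  obtain h | h | h | h : (v : ℕ) = 0 ∨ (v : ℕ) = 1 ∨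
      (2 ≤ (v : ℕ) ∧ (v : ℕ) ≤ 2*q+1) ∨ 2*q+2 ≤ (v : ℕ) := by omega
  · rw [show (range (4*q+2)).filter (spiderAdj q v) = Ico 1 (2*q+2) by
      ext; simp only [mem_filter, mem_range, mem_Ico, spiderAdj]; omega]
    simp [h]
  · rw [show (range (4*q+2)).filter (spiderAdj q v) = {0} by
      ext; simp only [mem_filter, mem_range, mem_singleton, spiderAdj]; omega]
    simp [h]
  · rw [show (range (4*q+2)).filter (spiderAdj q v) = {0, (v : ℕ) + 2*q} by
      ext; simp only [mem_filter, mem_range, mem_insert, mem_singleton, spiderAdj]; omega]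
    rw [card_pair (by omega), if_neg (by omega), if_pos h]
  · rw [show (range (4*q+2)).filter (spiderAdj q v) = {(v : ℕ) - 2*q} by
      ext; simp only [mem_filter, mem_range, mem_singleton, spiderAdj]; omega]
    rw [card_singleton, if_neg (by omega), if_neg (by omega)]

theorem edgeCount_spider (q : ℕ) : edgeCount (spider q) = 4*q+1 := by
  have hmid : ∑ i ∈ Ico 2 (2*q+2), spiderDeg q i = 2*q * 2 := by
    rw [sum_const_nat (m := 2) fun i hi => by
      simp only [mem_Ico] at hi; rw [spiderDeg, if_neg (by omega), if_pos (by omega)],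
      Nat.card_Ico]
    omega
  have hleaf : ∑ i ∈ Ico (2*q+2) (4*q+2), spiderDeg q i = 2*q * 1 := by
    rw [sum_const_nat (m := 1) fun i hi => by
      simp only [mem_Ico] at hi; rw [spiderDeg, if_neg (by omega), if_neg (by omega)],
      Nat.card_Ico]
    omega
  have hsum : ∑ i ∈ range (4*q+2), spiderDeg q i = 2 * (4*q+1) := by
    rw [range_eq_Ico,
      ← sum_Ico_consecutive _ (show 0 ≤ 2*q+2 by omega) (show 2*q+2 ≤ 4*q+2 by omega),
      ← sum_Ico_consecutive _ (show 0 ≤ 2 by omega) (show 2 ≤ 2*q+2 by omega), hmid, hleaf,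
      ← range_eq_Ico, sum_range_succ, sum_range_one]
    simp [spiderDeg]
    omega
  have := sum_deg_eq_two_mul_edgeCount (G := spider q)
  rw [sum_congr rfl fun v _ => deg_spider q v, Fin.sum_univ_eq_sum_range (spiderDeg q),
    hsum] at this
  omega

theorem spider_connected (q : ℕ) : (spider q).Connected := by
  have hroot : ∀ v : Fin (4*q+2), (spider q).Reachable ⟨0, by omega⟩ v := by
    intro v
    have hv := v.isLt
    obtain h | h | h :
        (v : ℕ) = 0 ∨ (1 ≤ (v : ℕ) ∧ (v : ℕ) ≤ 2*q+1) ∨ 2*q+2 ≤ (v : ℕ) := by omega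
    · rw [show v = ⟨0, by omega⟩ from Fin.ext h]
    · have hnbr : (spider q).Adj ⟨0, by omega⟩ v := by
        show spiderAdj q 0 v; unfold spiderAdj; omega
      exact hnbr.reachable
    · have hmid : (spider q).Adj ⟨0, by omega⟩ ⟨(v : ℕ) - 2*q, by omega⟩ := by
        show spiderAdj q 0 (v - 2*q); unfold spiderAdj; omega
      have hleaf : (spider q).Adj ⟨(v : ℕ) - 2*q, by omega⟩ v := by
        show spiderAdj q (v - 2*q) v; unfold spiderAdj; omega
      exact hmid.reachable.trans hleaf.reachable
  exact (SimpleGraph.connected_iff_exists_forall_reachable _).2 ⟨_, hroot⟩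

theorem spider_isTree (q : ℕ) : (spider q).IsTree :=
  isTree_of_connected_of_edgeCount (spider_connected q) (by rw [edgeCount_spider, Fintype.card_fin])

/-- The partner of a vertex in the perfect matching of `spider q`. -/
def spiderMate (q : ℕ) (v : Fin (4*q+2)) : Fin (4*q+2) :=
  ⟨if (v : ℕ) = 0 then 1 else if (v : ℕ) = 1 then 0
    else if (v : ℕ) ≤ 2*q+1 then v + 2*q else v - 2*q,
    by have := v.isLt; split_ifs <;> omega⟩

theorem spiderMate_spiderMate (q : ℕ) (v : Fin (4*q+2)) : spiderMate q (spiderMate q v) = v := by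
  have := v.isLt
  ext
  simp only [spiderMate]
  grind

theorem spider_adj_spiderMate (q : ℕ) (v : Fin (4*q+2)) : (spider q).Adj v (spiderMate q v) := by
  have := v.isLt
  simp only [spider_adj, spiderMate, spiderAdj]
  split_ifs <;> omega

def spiderMatching (q : ℕ) : Finset (Sym2 (Fin (4*q+2))) :=
  univ.image fun v => s(v, spiderMate q v)

theorem spiderMatching_subset_edgeSet (q : ℕ) :
    (spiderMatching q : Set (Sym2 (Fin (4*q+2)))) ⊆ (spider q).edgeSet := by
  intro e he
  obtain ⟨v, -, rfl⟩ := mem_image.1 he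
  exact spider_adj_spiderMate q v

theorem spiderMatching_cover (q : ℕ) (v : Fin (4*q+2)) : ∃ e ∈ spiderMatching q, v ∈ e :=
  ⟨_, mem_image_of_mem _ (mem_univ v), Sym2.mem_mk_left _ _⟩

theorem isMatchingFinset_spiderMatching (q : ℕ) :
    IsMatchingFinset (spider q) (spiderMatching q) := by
  refine ⟨spiderMatching_subset_edgeSet q, ?_⟩
  have hend : ∀ v w, w ∈ s(v, spiderMate q v) →
      s(v, spiderMate q v) = s(w, spiderMate q w) := by
    intro v w hw
    rcases Sym2.mem_iff.1 hw with rfl | rfl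
    · rfl
    · rw [spiderMate_spiderMate, Sym2.eq_swap]
  intro e he f hf hef w hwe hwf
  obtain ⟨v, -, rfl⟩ := mem_image.1 he
  obtain ⟨v', -, rfl⟩ := mem_image.1 hf
  exact hef ((hend v w hwe).trans (hend v' w hwf).symm)

def spiderLeaves (q : ℕ) : Finset (Fin (4*q+2)) :=
  (insert 1 (Ico (2*q+2) (4*q+2))).attachFin fun i hi => by
    simp only [mem_insert, mem_Ico] at hi; omega

theorem mem_spiderLeaves {q : ℕ} {v : Fin (4*q+2)} :
    v ∈ spiderLeaves q ↔ (v : ℕ) = 1 ∨ 2*q+2 ≤ (v : ℕ) := by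
  have := v.isLt
  simp only [spiderLeaves, mem_attachFin, mem_insert, mem_Ico]
  omega

theorem card_spiderLeaves (q : ℕ) : (spiderLeaves q).card = 2*q+1 := by
  rw [spiderLeaves, card_attachFin, card_insert_of_notMem (by simp), Nat.card_Ico]
  omega

theorem isIndepFinset_spiderLeaves (q : ℕ) : IsIndepFinset (spider q) (spiderLeaves q) := by
  intro a ha b hb
  rw [mem_spiderLeaves] at ha hb
  simp only [spider_adj, spiderAdj]
  omega

theorem card_spiderMatching (q : ℕ) : (spiderMatching q).card = 2*q+1 := by
  have hle := (isMatchingFinset_spiderMatching q).two_mul_card_le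
  have hge := (isIndepFinset_spiderLeaves q).card_le_of_cover
    (spiderMatching_subset_edgeSet q) (spiderMatching_cover q)
  rw [Fintype.card_fin] at hle
  rw [card_spiderLeaves] at hge
  omega

theorem matchNum_spider (q : ℕ) : matchNum (spider q) = 2*q+1 := by
  refine IsGreatest.csSup_eq
    ⟨⟨_, isMatchingFinset_spiderMatching q, card_spiderMatching q⟩, ?_⟩
  rintro k ⟨M, hM, rfl⟩
  have := hM.two_mul_card_le
  rw [Fintype.card_fin] at this
  omega

theorem indepNum_spider (q : ℕ) : indepNum (spider q) = 2*q+1 := by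
  refine IsGreatest.csSup_eq ⟨⟨_, isIndepFinset_spiderLeaves q, card_spiderLeaves q⟩, ?_⟩
  rintro k ⟨s, hs, rfl⟩
  exact card_spiderMatching q ▸
    hs.card_le_of_cover (spiderMatching_subset_edgeSet q) (spiderMatching_cover q)

theorem deg_spider_of_mem_spiderLeaves {q : ℕ} {v : Fin (4*q+2)} (hv : v ∈ spiderLeaves q) :
    deg (spider q) v = 1 := by
  rw [mem_spiderLeaves] at hv
  rw [deg_spider, spiderDeg, if_neg (by omega), if_neg (by omega)]

theorem two_le_deg_spider_of_notMem_spiderLeaves {q : ℕ} (hq : 1 ≤ q) {v : Fin (4*q+2)}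
    (hv : v ∉ spiderLeaves q) : 2 ≤ deg (spider q) v := by
  rw [mem_spiderLeaves] at hv
  rw [deg_spider, spiderDeg]
  split_ifs <;> omega

theorem annNum_spider {q : ℕ} (hq : 1 ≤ q) : annNum (spider q) = 3*q+1 := by
  refine IsGreatest.csSup_eq ⟨?_, ?_⟩
  · let H : Finset (Fin (4*q+2)) := (Ico 2 (q+2)).attachFin fun i hi => by
      simp only [mem_Ico] at hi; omega
    have hdisj : Disjoint (spiderLeaves q) H := by
      rw [disjoint_left]
      intro v hL hH
      simp only [mem_spiderLeaves, H, mem_attachFin, mem_Ico] at hL hH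
      omega
    have hH : ∀ v ∈ H, deg (spider q) v = 2 := by
      intro v hv
      simp only [H, mem_attachFin, mem_Ico] at hv
      rw [deg_spider, spiderDeg, if_neg (by omega), if_pos (by omega)]
    refine ⟨spiderLeaves q ∪ H, ?_, ?_⟩
    · rw [card_union_of_disjoint hdisj, card_spiderLeaves, card_attachFin, Nat.card_Ico]
      omega
    · rw [sum_union hdisj, sum_const_nat fun v hv => deg_spider_of_mem_spiderLeaves hv,
        sum_const_nat hH, card_spiderLeaves, card_attachFin, Nat.card_Ico, edgeCount_spider]
      omega
  · rintro k ⟨A, rfl, hA⟩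
    have := two_mul_card_le_sum_add_card (A := A)
      (fun v hv => (deg_spider_of_mem_spiderLeaves hv).ge)
      fun v hv => two_le_deg_spider_of_notMem_spiderLeaves hq hv
    rw [card_spiderLeaves] at this
    rw [edgeCount_spider] at hA
    omega

theorem stmt8 (q : ℕ) (hq : 1 ≤ q) :
    ∃ T : SimpleGraph (Fin (4 * q + 2)), T.IsTree ∧
      matchNum T = 2 * q + 1 ∧ indepNum T = 2 * q + 1 ∧ annNum T = 3 * q + 1 ∧
      (annNum T : ℚ) - (indepNum T : ℚ) = ((matchNum T : ℚ) - 1) / 2 := by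
  refine ⟨spider q, spider_isTree q, matchNum_spider q, indepNum_spider q, annNum_spider hq, ?_⟩
  rw [matchNum_spider, indepNum_spider, annNum_spider hq]
  push_cast
  ring

end AnnPaper
end

section
/- For every tree T, a(T) ≤ (3/2)α(T) - 1/2, i.e., 2a(T) ≤ 3α(T) - 1. -/
/-!
Let `A` be a set of `a(T)` vertices whose degree sum is at most `m(T) = n - 1`. In a tree with
at least three vertices every degree is at least one and the leaves are pairwise non-adjacent,
so counting each non-leaf of `A` twice gives `2 a(T) ≤ m(T) + α(T)`. A tree is bipartite, so
`n ≤ 2 α(T)`, and together `2 a(T) ≤ 3 α(T) - 1`. Trees on at most two vertices have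
`a(T) ≤ 1 ≤ α(T)`.
-/

open Finset

namespace AnnPaper

variable {V : Type*}

open SimpleGraph

variable {G : SimpleGraph V}

lemma deg_eq_degree (v : V) [Fintype (G.neighborSet v)] : deg G v = G.degree v := by
  rw [deg, Set.ncard_eq_toFinset_card', Set.toFinset_card, card_neighborSet_eq_degree]

lemma neighborSet_eq_singleton_of_deg_eq_one {u v : V} (hu : deg G u = 1) (huv : G.Adj u v) :
    G.neighborSet u = {v} := by
  obtain ⟨a, ha⟩ := Set.ncard_eq_one.mp hu
  have hv : v ∈ G.neighborSet u := huv
  rw [ha] at hv ⊢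
  rw [Set.mem_singleton_iff.mp hv]

lemma mem_of_reachable_of_adj_closed {S : Set V} (hS : ∀ x y, G.Adj x y → x ∈ S → y ∈ S)
    {u w : V} (h : G.Reachable u w) (hu : u ∈ S) : w ∈ S := by
  have h' := (reachable_iff_reflTransGen u w).mp h
  clear h
  induction h' with
  | refl => exact hu
  | tail _ hxy ih => exact hS _ _ hxy ih

lemma eq_or_eq_of_adj_of_deg_eq_one (hG : G.Preconnected) {u v : V}
    (huv : G.Adj u v) (hu : deg G u = 1) (hv : deg G v = 1) (w : V) : w = u ∨ w = v := by
  have hclosed : ∀ x y, G.Adj x y → x ∈ ({u, v} : Set V) → y ∈ ({u, v} : Set V) := by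
    rintro x y hxy (rfl | rfl)
    · exact Or.inr ((neighborSet_eq_singleton_of_deg_eq_one hu huv).subset hxy)
    · exact Or.inl ((neighborSet_eq_singleton_of_deg_eq_one hv huv.symm).subset hxy)
  exact mem_of_reachable_of_adj_closed hclosed (hG u w) (by simp)

lemma isIndepFinset_deg_eq_one_of_preconnected [Fintype V] (hG : G.Preconnected)
    (hV : 3 ≤ Fintype.card V) : IsIndepFinset G {v | deg G v = 1} := by
  classical
  intro u hu v hv huv
  rw [mem_filter] at hu hv
  have hsub : (univ : Finset V) ⊆ {u, v} := fun w _ => by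
    simpa using eq_or_eq_of_adj_of_deg_eq_one hG huv hu.2 hv.2 w
  have := (card_le_card hsub).trans card_le_two
  rw [card_univ] at this
  omega

lemma one_le_deg_of_preconnected [Finite V] [Nontrivial V] (hG : G.Preconnected) (v : V) :
    1 ≤ deg G v := by
  have := Fintype.ofFinite V
  classical
  rw [deg_eq_degree]
  exact hG.degree_pos_of_nontrivial v

lemma IsIndepFinset.card_le_indepNum [Fintype V] {s : Finset V} (hs : IsIndepFinset G s) :
    s.card ≤ indepNum G :=
  le_csSup ⟨Fintype.card V, fun _ ⟨t, _, ht⟩ => ht ▸ t.card_le_univ⟩ ⟨s, hs, rfl⟩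

lemma card_le_two_mul_indepNum_of_colorable_two [Fintype V] (hG : G.Colorable 2) :
    Fintype.card V ≤ 2 * indepNum G := by
  classical
  obtain ⟨C⟩ := hG
  have hclass : ∀ c, IsIndepFinset G {v | C v = c} := fun c a ha b hb hab => by
    rw [mem_filter] at ha hb
    exact C.valid hab (ha.2.trans hb.2.symm)
  have hsplit := card_filter_add_card_filter_not (s := univ) (fun v => C v = 0)
  have h0 := (hclass 0).card_le_indepNum
  have h1 := (hclass 1).card_le_indepNum
  have hnot : ∀ v, ¬ C v = 0 ↔ C v = 1 := fun v => by generalize C v = c; fin_cases c <;> simp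
  simp only [hnot, card_univ] at hsplit
  omega

lemma exists_card_eq_annNum [Fintype V] (G : SimpleGraph V) :
    ∃ A : Finset V, A.card = annNum G ∧ ∑ v ∈ A, deg G v ≤ edgeCount G :=
  Nat.sSup_mem (s := {k | ∃ A : Finset V, A.card = k ∧ ∑ v ∈ A, deg G v ≤ edgeCount G})
    ⟨0, ∅, by simp⟩ ⟨Fintype.card V, fun _ ⟨A, hA, _⟩ => hA ▸ A.card_le_univ⟩

lemma annNum_le_card [Fintype V] (G : SimpleGraph V) : annNum G ≤ Fintype.card V := by
  obtain ⟨A, hA, -⟩ := exists_card_eq_annNum G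
  exact hA ▸ A.card_le_univ

lemma annNum_le_edgeCount [Fintype V] (hdeg : ∀ v, 1 ≤ deg G v) : annNum G ≤ edgeCount G := by
  obtain ⟨A, hA, hsum⟩ := exists_card_eq_annNum G
  calc annNum G = ∑ _v ∈ A, 1 := by simp [hA]
    _ ≤ ∑ v ∈ A, deg G v := sum_le_sum fun v _ => hdeg v
    _ ≤ edgeCount G := hsum

lemma two_mul_card_le_sum_deg_add_card_leaves (hdeg : ∀ v, 1 ≤ deg G v)
    (A : Finset V) : 2 * A.card ≤ ∑ v ∈ A, deg G v + {v ∈ A | deg G v = 1}.card := by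
  calc 2 * A.card = ∑ _v ∈ A, 2 := by simp [mul_comm]
    _ ≤ ∑ v ∈ A, (deg G v + if deg G v = 1 then 1 else 0) :=
        sum_le_sum fun v _ => by have := hdeg v; split_ifs <;> omega
    _ = _ := by rw [sum_add_distrib, card_filter]

lemma two_mul_annNum_le_of_preconnected [Fintype V] (hG : G.Preconnected)
    (hV : 3 ≤ Fintype.card V) : 2 * annNum G ≤ edgeCount G + indepNum G := by
  classical
  have : Nontrivial V := Fintype.one_lt_card_iff_nontrivial.mp (by omega)
  obtain ⟨A, hA, hsum⟩ := exists_card_eq_annNum G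
  have hleaves : {v ∈ A | deg G v = 1}.card ≤ indepNum G :=
    (card_le_card (filter_subset_filter _ (subset_univ A))).trans
      (isIndepFinset_deg_eq_one_of_preconnected hG hV).card_le_indepNum
  have := two_mul_card_le_sum_deg_add_card_leaves (one_le_deg_of_preconnected hG) A
  omega

lemma edgeCount_add_one_of_isTree [Finite V] (hT : G.IsTree) : edgeCount G + 1 = Nat.card V :=
  (isTree_iff_connected_and_card.mp hT).2

theorem stmt11 {V : Type*} [Fintype V] (T : SimpleGraph V) (hT : T.IsTree) :
    (annNum T : ℚ) ≤ 3 / 2 * (indepNum T : ℚ) - 1 / 2 := by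
  suffices h : 2 * annNum T + 1 ≤ 3 * indepNum T by
    have : (2 * annNum T + 1 : ℚ) ≤ 3 * indepNum T := by exact_mod_cast h
    linarith
  have hm := edgeCount_add_one_of_isTree hT
  rw [Nat.card_eq_fintype_card] at hm
  have hα := card_le_two_mul_indepNum_of_colorable_two hT.colorable_two
  have hn : 0 < Fintype.card V := Fintype.card_pos_iff.mpr hT.connected.nonempty
  obtain h3 | h2 | h1 : 3 ≤ Fintype.card V ∨ Fintype.card V = 2 ∨ Fintype.card V = 1 := by omega
  · have := two_mul_annNum_le_of_preconnected hT.connected.preconnected h3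
    omega
  · have : Nontrivial V := Fintype.one_lt_card_iff_nontrivial.mp (by omega)
    have := annNum_le_edgeCount (one_le_deg_of_preconnected hT.connected.preconnected)
    omega
  · have := annNum_le_card T
    omega

end AnnPaper
end
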